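/- arXiv:1906.01394 — 2 statements merged into one kernel-verified Lean document; each statement's English description precedes it below -/
import Mathlib

section
/- Every rank-two entangled Bell-diagonal state (p₂ = p₃ = 0, 1/2 < p₀ < 1, p₁ = 1 - p₀ > 0) has strictly positive fidelity deviation Δ = (2/(3√5))(1 - p₀), and as p₀ → 1/2⁺, F = (2/3)(1/2 + p₀) → 2/3⁺ while Δ → 1/(3√5)⁻. -/
open Filter Topology

lemma Real.sqrt_ten : √10 = √2 * √5 := by
  rw [← Real.sqrt_mul (by norm_num)]
  norm_num

/-- With two nonzero Bell weights `t` and `0`, the three pairwise differences contribute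
`t² + t² + 0`, and the factor `√2` of `√(2t²)` cancels against `√10 = √2 √5`. -/
lemma two_div_three_sqrt_ten_mul_sqrt_two_mul_sq {t : ℝ} (ht : 0 ≤ t) :
    2 / (3 * √10) * √(2 * t ^ 2) = 2 / (3 * √5) * t := by
  have h2 : 0 < √2 := by positivity
  rw [Real.sqrt_mul (by norm_num), Real.sqrt_sq ht, Real.sqrt_ten]
  field_simp

/-- Rank-two entangled Bell-diagonal states (`p₂ = p₃ = 0`, `1/2 < p₀ < 1`,
`p₁ = 1 - p₀`) have strictly positive deviation `Δ = (2/(3√5))(1-p₀)`, with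
`Δ = (2/(3√10))√(2(1-p₀)²)`, and as `p₀ → 1/2⁺` the fidelity
`(2/3)(1/2+p₀) → 2/3` while `Δ → 1/(3√5)`. -/
theorem rank_two_bell_diagonal_deviation :
    (∀ p₀ : ℝ, 1 / 2 < p₀ → p₀ < 1 →
      (2 / (3 * Real.sqrt 10)) * Real.sqrt (2 * (1 - p₀) ^ 2)
          = (2 / (3 * Real.sqrt 5)) * (1 - p₀) ∧
        0 < (2 / (3 * Real.sqrt 5)) * (1 - p₀)) ∧
    Tendsto (fun p₀ : ℝ => (2 / 3) * (1 / 2 + p₀)) (𝓝[>] (1 / 2)) (𝓝 (2 / 3)) ∧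
    Tendsto (fun p₀ : ℝ => (2 / (3 * Real.sqrt 5)) * (1 - p₀)) (𝓝[>] (1 / 2))
      (𝓝 (1 / (3 * Real.sqrt 5))) := by
  refine ⟨fun p₀ _ hp₀ => ⟨two_div_three_sqrt_ten_mul_sqrt_two_mul_sq (by linarith),
    mul_pos (by positivity) (by linarith)⟩, ?_, ?_⟩
  · exact ((by fun_prop : Continuous fun p₀ : ℝ => 2 / 3 * (1 / 2 + p₀)).tendsto' _ _
      (by norm_num)).mono_left nhdsWithin_le_nhds
  · exact ((by fun_prop : Continuous fun p₀ : ℝ => 2 / (3 * √5) * (1 - p₀)).tendsto' _ _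
      (by field_simp; norm_num)).mono_left nhdsWithin_le_nhds
end

section
/- For real diagonal matrices with entries of prescribed signs: if t₁ ≥ t₂ ≥ t₃ ≥ 0 and two eigenvalues have λ = -1 and one has λ = +1 (det T > 0 case), then the minimum over permutations (i,j,k) of √((tᵢ-tⱼ)² + (tᵢ+t_k)² + (tⱼ+t_k)²) is attained at (i,j,k) = (1,2,3), i.e., pairing the deviation-minimizing permutation with the fidelity-maximizing one t₁ + t₂ - t₃. -/
/-!
Expanding, `(a - b)² + (a + c)² + (b + c)² = (a + b + c)² + (a² + b² + c²) - 4 a b`. The first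
two terms are symmetric in `(a, b, c)`, so over the permutations of `(t₁, t₂, t₃)` the expression
is smallest when the product `tᵢ tⱼ` is largest, which for nonnegative entries is the product
`t₁ t₂` of the two largest ones.
-/

theorem sub_sq_add_add_sq_add_add_sq (a b c : ℝ) :
    (a - b) ^ 2 + (a + c) ^ 2 + (b + c) ^ 2
      = (a + b + c) ^ 2 + (a ^ 2 + b ^ 2 + c ^ 2) - 4 * (a * b) := by
  ring

theorem sqrt_sub_sq_add_add_sq_add_add_sq_le {a b c a' b' c' : ℝ}
    (hsum : a' + b' + c' = a + b + c) (hsq : a' ^ 2 + b' ^ 2 + c' ^ 2 = a ^ 2 + b ^ 2 + c ^ 2)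
    (hmul : a' * b' ≤ a * b) :
    Real.sqrt ((a - b) ^ 2 + (a + c) ^ 2 + (b + c) ^ 2)
      ≤ Real.sqrt ((a' - b') ^ 2 + (a' + c') ^ 2 + (b' + c') ^ 2) := by
  apply Real.sqrt_le_sqrt
  rw [sub_sq_add_add_sq_add_add_sq, sub_sq_add_add_sq_add_add_sq, hsum, hsq]
  linarith

/-- For `t₁ ≥ t₂ ≥ t₃ ≥ 0` (the `det T > 0` case), the minimum over permutations
`(i,j,k)` of `√((tᵢ-tⱼ)² + (tᵢ+t_k)² + (tⱼ+t_k)²)` is attained at `(1,2,3)`,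
i.e. at the permutation maximizing the fidelity expression `t₁ + t₂ - t₃`. -/
theorem deviation_min_at_fidelity_max (t₁ t₂ t₃ : ℝ)
    (h₁₂ : t₁ ≥ t₂) (h₂₃ : t₂ ≥ t₃) (h₃ : 0 ≤ t₃) :
    Real.sqrt ((t₁ - t₂) ^ 2 + (t₁ + t₃) ^ 2 + (t₂ + t₃) ^ 2)
        ≤ Real.sqrt ((t₂ - t₃) ^ 2 + (t₂ + t₁) ^ 2 + (t₃ + t₁) ^ 2) ∧
    Real.sqrt ((t₁ - t₂) ^ 2 + (t₁ + t₃) ^ 2 + (t₂ + t₃) ^ 2)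
        ≤ Real.sqrt ((t₁ - t₃) ^ 2 + (t₁ + t₂) ^ 2 + (t₃ + t₂) ^ 2) := by
  have h₂ : 0 ≤ t₂ := h₃.trans h₂₃
  have h₁ : 0 ≤ t₁ := h₂.trans h₁₂
  refine ⟨sqrt_sub_sq_add_add_sq_add_add_sq_le (by ring) (by ring) ?_,
    sqrt_sub_sq_add_add_sq_add_add_sq_le (by ring) (by ring) ?_⟩
  · rw [mul_comm t₁ t₂]
    exact mul_le_mul_of_nonneg_left (h₂₃.trans h₁₂) h₂
  · exact mul_le_mul_of_nonneg_left h₂₃ h₁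
end
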